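/- Let z ∈ ℂ^N with Re z_j > 0 for all j, and let ν̲ = (ν₀, ν) with Re ν₀ > 0 and (Re ν_1/Re ν₀, …, Re ν_n/Re ν₀) in the interior of the full-dimensional Newton polytope Δ_G. Then for every real s > 0: (a) J_A(ν̲, (s·z_1, …, s·z_N)) = s^{−ν₀} · J_A(ν̲, z); and (b) for every b ∈ {1, …, n}, J_A(ν̲, (s^{(a_1)_b}·z_1, …, s^{(a_N)_b}·z_N)) = s^{−ν_b} · J_A(ν̲, z), where (a_j)_b denotes the b-th entry of the exponent vector a_j and s^{−ν₀}, s^{−ν_b} are principal complex powers. -/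

import Mathlib

/-!
Both identities come from symmetries of the integrand. The polynomial `G_z` is linear in `z`,
so multiplying `z` by `s > 0` multiplies the integrand by `s^{-ν₀}` pointwise. For (b), the
torus `ℝ_{>0}^n` acts on the positive orthant by `x ↦ d · x` with Jacobian `∏ dᵢ`; this
substitution turns `x^{a_j}` into `d^{a_j} x^{a_j}` and `x^{ν-1} dx` into `d^ν x^{ν-1} dx`, and
`d = (1, …, s, …, 1)` gives (b).
-/

open MeasureTheory Complex Finset

lemma ofReal_mul_cpow {s : ℝ} (hs : 0 ≤ s) (w c : ℂ) :
    ((s : ℂ) * w) ^ c = (s : ℂ) ^ c * w ^ c := by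
  rcases eq_or_ne c 0 with rfl | hc
  · simp
  rcases hs.eq_or_lt with rfl | hs
  · simp [zero_cpow hc]
  rcases eq_or_ne w 0 with rfl | hw
  · simp [zero_cpow hc]
  have hs' : (s : ℂ) ≠ 0 := ofReal_ne_zero.mpr hs.ne'
  rw [cpow_def_of_ne_zero (mul_ne_zero hs' hw), log_ofReal_mul hs hw, cpow_def_of_ne_zero hs',
    cpow_def_of_ne_zero hw, add_mul, exp_add, ofReal_log hs.le]

lemma image_mul_posOrthant {ι : Type*} {d : ι → ℝ} (hd : ∀ i, 0 < d i) :
    (fun x i => d i * x i) '' {x : ι → ℝ | ∀ i, 0 < x i} = {x | ∀ i, 0 < x i} := by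
  ext y
  constructor
  · rintro ⟨x, hx, rfl⟩ i
    exact mul_pos (hd i) (hx i)
  · intro hy
    exact ⟨fun i => y i / d i, fun i => div_pos (hy i) (hd i),
      funext fun i => mul_div_cancel₀ _ (hd i).ne'⟩

lemma prod_apply_mulSingle {ι M N : Type*} [Fintype ι] [DecidableEq ι] [One M] [CommMonoid N]
    (F : ι → M → N) (hF : ∀ i, F i 1 = 1) (b : ι) (s : M) :
    ∏ i, F i ((Pi.mulSingle b s : ι → M) i) = F b s := by
  simp_rw [Pi.apply_mulSingle F hF, Fintype.prod_pi_mulSingle']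

variable {ι κ : Type*} [Fintype ι] [Fintype κ]

lemma setIntegral_posOrthant_eq_smul_comp_mul {E : Type*} [NormedAddCommGroup E]
    [NormedSpace ℝ E] {d : ι → ℝ} (hd : ∀ i, 0 < d i) (g : (ι → ℝ) → E) :
    ∫ x in {x : ι → ℝ | ∀ i, 0 < x i}, g x
      = (∏ i, d i) • ∫ x in {x : ι → ℝ | ∀ i, 0 < x i}, g (fun i => d i * x i) := by
  classical
  set L : (ι → ℝ) →L[ℝ] ι → ℝ := (Matrix.toLin' (Matrix.diagonal d)).toContinuousLinearMap
  have hL : ⇑L = fun x i => d i * x i := by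
    funext x i
    simp [L, Matrix.mulVec_diagonal]
  have hdet : L.det = ∏ i, d i := by
    simp [L, LinearMap.det_toContinuousLinearMap, LinearMap.det_toLin']
  have hmeas : MeasurableSet {x : ι → ℝ | ∀ i, 0 < x i} := by
    simpa only [Set.ofPred_forall] using
      MeasurableSet.iInter fun i => measurableSet_lt measurable_const (measurable_pi_apply i)
  have hinj : Set.InjOn L {x : ι → ℝ | ∀ i, 0 < x i} := fun x _ y _ h => by
    funext i
    rw [hL] at h
    exact mul_left_cancel₀ (hd i).ne' (congrFun h i)
  have hchange := integral_image_eq_integral_abs_det_fderiv_smul volume hmeas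
    (fun x _ => L.hasFDerivAt.hasFDerivWithinAt) hinj g
  rwa [hL, image_mul_posOrthant hd, hdet, abs_of_pos (prod_pos fun i _ => hd i),
    integral_smul] at hchange

noncomputable def feynmanIntegrand (a : κ → ι → ℕ) (ν₀ : ℂ) (ν : ι → ℂ) (z : κ → ℂ)
    (x : ι → ℝ) : ℂ :=
  (∏ i, (x i : ℂ) ^ (ν i - 1)) * (∑ j, z j * ∏ i, (x i : ℂ) ^ (a j i)) ^ (-ν₀)

noncomputable def feynmanIntegral (a : κ → ι → ℕ) (ν₀ : ℂ) (ν : ι → ℂ) (z : κ → ℂ) : ℂ :=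
  Gamma ν₀ * ∫ x in {x : ι → ℝ | ∀ i, 0 < x i}, feynmanIntegrand a ν₀ ν z x

variable (a : κ → ι → ℕ) (ν₀ : ℂ) (ν : ι → ℂ) (z : κ → ℂ)

lemma feynmanIntegrand_smul {s : ℝ} (hs : 0 ≤ s) (x : ι → ℝ) :
    feynmanIntegrand a ν₀ ν (fun j => s * z j) x
      = (s : ℂ) ^ (-ν₀) * feynmanIntegrand a ν₀ ν z x := by
  simp_rw [feynmanIntegrand, mul_assoc, ← mul_sum, ofReal_mul_cpow hs]
  ring

lemma feynmanIntegrand_comp_mul {d : ι → ℝ} (hd : ∀ i, 0 ≤ d i) (x : ι → ℝ) :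
    feynmanIntegrand a ν₀ ν z (fun i => d i * x i)
      = (∏ i, (d i : ℂ) ^ (ν i - 1))
        * feynmanIntegrand a ν₀ ν (fun j => (∏ i, (d i : ℂ) ^ (a j i)) * z j) x := by
  simp_rw [feynmanIntegrand, ofReal_mul, ofReal_mul_cpow (hd _), mul_pow, prod_mul_distrib]
  rw [mul_assoc]
  congr 3
  exact sum_congr rfl fun j _ => by ring

lemma feynmanIntegral_smul {s : ℝ} (hs : 0 ≤ s) :
    feynmanIntegral a ν₀ ν (fun j => s * z j) = (s : ℂ) ^ (-ν₀) * feynmanIntegral a ν₀ ν z := by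
  simp_rw [feynmanIntegral, feynmanIntegrand_smul a ν₀ ν z hs, integral_const_mul]
  exact mul_left_comm _ _ _

lemma feynmanIntegral_torusAction {d : ι → ℝ} (hd : ∀ i, 0 < d i) :
    feynmanIntegral a ν₀ ν (fun j => (∏ i, (d i : ℂ) ^ (a j i)) * z j)
      = (∏ i, (d i : ℂ) ^ (-ν i)) * feynmanIntegral a ν₀ ν z := by
  have hjac : (∏ i, (d i : ℂ) ^ (-ν i)) * (∏ i, (d i : ℂ)) * ∏ i, (d i : ℂ) ^ (ν i - 1) = 1 := by
    rw [← prod_mul_distrib, ← prod_mul_distrib]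
    refine prod_eq_one fun i _ => ?_
    have hd0 : (d i : ℂ) ≠ 0 := ofReal_ne_zero.mpr (hd i).ne'
    have hpow : (d i : ℂ) ^ ν i ≠ 0 := cpow_ne_zero_iff.mpr (Or.inl hd0)
    rw [cpow_sub _ _ hd0, cpow_one, cpow_neg]
    field_simp
  have hchange := setIntegral_posOrthant_eq_smul_comp_mul hd (feynmanIntegrand a ν₀ ν z)
  simp only [feynmanIntegrand_comp_mul a ν₀ ν z (fun i => (hd i).le), integral_const_mul,
    real_smul, ofReal_prod] at hchange
  unfold feynmanIntegral
  linear_combination -(∏ i, (d i : ℂ) ^ (-ν i)) * Gamma ν₀ * hchange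
    - Gamma ν₀ * (∫ x in {x : ι → ℝ | ∀ i, 0 < x i},
      feynmanIntegrand a ν₀ ν (fun j => (∏ i, (d i : ℂ) ^ (a j i)) * z j) x) * hjac

theorem feynman_scaling_general (n N : ℕ)
    (a : Fin N → Fin n → ℕ)
    (z : Fin N → ℂ)
    (ν₀ : ℂ) (ν : Fin n → ℂ) :
    ∀ s : ℝ, 0 < s →
      (Complex.Gamma ν₀ *
          ∫ x in {x : Fin n → ℝ | ∀ i, 0 < x i},
            (∏ i, (x i : ℂ) ^ (ν i - 1)) *
              (∑ j, ((s : ℂ) * z j) * ∏ i, (x i : ℂ) ^ (a j i)) ^ (-ν₀)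
        = (s : ℂ) ^ (-ν₀) *
            (Complex.Gamma ν₀ *
              ∫ x in {x : Fin n → ℝ | ∀ i, 0 < x i},
                (∏ i, (x i : ℂ) ^ (ν i - 1)) *
                  (∑ j, z j * ∏ i, (x i : ℂ) ^ (a j i)) ^ (-ν₀))) ∧
      ∀ b : Fin n,
        Complex.Gamma ν₀ *
            ∫ x in {x : Fin n → ℝ | ∀ i, 0 < x i},
              (∏ i, (x i : ℂ) ^ (ν i - 1)) *
                (∑ j, ((s : ℂ) ^ (a j b) * z j) * ∏ i, (x i : ℂ) ^ (a j i)) ^ (-ν₀)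
          = (s : ℂ) ^ (-(ν b)) *
              (Complex.Gamma ν₀ *
                ∫ x in {x : Fin n → ℝ | ∀ i, 0 < x i},
                  (∏ i, (x i : ℂ) ^ (ν i - 1)) *
                    (∑ j, z j * ∏ i, (x i : ℂ) ^ (a j i)) ^ (-ν₀)) := by
  intro s hs
  refine ⟨feynmanIntegral_smul a ν₀ ν z hs.le, fun b => ?_⟩
  have hd : ∀ i, 0 < (Pi.mulSingle b s : Fin n → ℝ) i := fun i => by
    rw [Pi.mulSingle_apply]
    split_ifs <;> positivity
  have hmonomial (j : Fin N) : ∏ i, ((Pi.mulSingle b s : Fin n → ℝ) i : ℂ) ^ (a j i)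
      = (s : ℂ) ^ (a j b) :=
    prod_apply_mulSingle (fun i (t : ℝ) => (t : ℂ) ^ (a j i)) (fun i => by simp) b s
  have hweight : ∏ i, ((Pi.mulSingle b s : Fin n → ℝ) i : ℂ) ^ (-ν i) = (s : ℂ) ^ (-ν b) :=
    prod_apply_mulSingle (fun i (t : ℝ) => (t : ℂ) ^ (-ν i)) (fun i => by simp) b s
  have htorus := feynmanIntegral_torusAction a ν₀ ν z hd
  simp only [hmonomial, hweight] at htorus
  exact htorus

/-- Homogeneity (Euler) equations: for real `s > 0`,
(a) `J_A(ν̲, s·z) = s^{−ν₀} J_A(ν̲, z)`, and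
(b) for each coordinate `b`, `J_A(ν̲, (s^{(aⱼ)_b} zⱼ)ⱼ) = s^{−ν_b} J_A(ν̲, z)`. -/
theorem feynman_scaling (n N : ℕ) (hn : 1 ≤ n) (hN : n + 1 ≤ N)
    (a : Fin N → Fin n → ℕ)
    (z : Fin N → ℂ) (hz : ∀ j, 0 < (z j).re)
    (ν₀ : ℂ) (ν : Fin n → ℂ) (hν₀ : 0 < ν₀.re)
    (hmem : (fun i => (ν i).re / ν₀.re) ∈
      interior (convexHull ℝ (Set.range fun j : Fin N => fun i : Fin n => (a j i : ℝ)))) :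
    ∀ s : ℝ, 0 < s →
      (Complex.Gamma ν₀ *
          ∫ x in {x : Fin n → ℝ | ∀ i, 0 < x i},
            (∏ i, (x i : ℂ) ^ (ν i - 1)) *
              (∑ j, ((s : ℂ) * z j) * ∏ i, (x i : ℂ) ^ (a j i)) ^ (-ν₀)
        = (s : ℂ) ^ (-ν₀) *
            (Complex.Gamma ν₀ *
              ∫ x in {x : Fin n → ℝ | ∀ i, 0 < x i},
                (∏ i, (x i : ℂ) ^ (ν i - 1)) *
                  (∑ j, z j * ∏ i, (x i : ℂ) ^ (a j i)) ^ (-ν₀))) ∧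
      ∀ b : Fin n,
        Complex.Gamma ν₀ *
            ∫ x in {x : Fin n → ℝ | ∀ i, 0 < x i},
              (∏ i, (x i : ℂ) ^ (ν i - 1)) *
                (∑ j, ((s : ℂ) ^ (a j b) * z j) * ∏ i, (x i : ℂ) ^ (a j i)) ^ (-ν₀)
          = (s : ℂ) ^ (-(ν b)) *
              (Complex.Gamma ν₀ *
                ∫ x in {x : Fin n → ℝ | ∀ i, 0 < x i},
                  (∏ i, (x i : ℂ) ^ (ν i - 1)) *
                    (∑ j, z j * ∏ i, (x i : ℂ) ^ (a j i)) ^ (-ν₀)) :=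
  feynman_scaling_general n N a z ν₀ ν
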